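/- The integral ∫₀^∞ ((t²+1)^{1/3} − t^{2/3}) dt converges and equals (3/5)·∫₁^∞ dx/√(x³−1). -/

import Mathlib

open MeasureTheory Set Real Filter Topology

/-!
Write `f t = (t² + 1)^{1/3} - t^{2/3}` and `h t = (t² + 1)^{-2/3}`. A direct computation gives
`(t f(t))' = (5/3) f(t) - (2/3) h(t)`, and `t f(t)` vanishes at `0` and at `∞`, so
`∫₀^∞ f = (2/5) ∫₀^∞ h`. The substitution `x = (t² + 1)^{1/3}`, for which `x³ - 1 = t²` and
`dx = (2/3) t h(t) dt`, turns `∫₁^∞ dx / √(x³ - 1)` into `(2/3) ∫₀^∞ h`.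
Both `f` and `t f(t)` are controlled through `0 ≤ f ≤ h`: with `a = (t² + 1)^{1/3}` and
`b = t^{2/3}` one has `a³ - b³ = 1`, so `f = 1 / (a² + ab + b²) ≤ 1 / a² = h`.
-/

lemma rpow_one_div_three_pow_three {x : ℝ} (hx : 0 ≤ x) : (x ^ ((1 : ℝ) / 3)) ^ 3 = x := by
  simpa using rpow_inv_natCast_pow hx (n := 3) (by norm_num)

lemma sub_mul_sq_le_pow_three_sub_pow_three {a b : ℝ} (hb : 0 ≤ b) (hba : b ≤ a) :
    (a - b) * a ^ 2 ≤ a ^ 3 - b ^ 3 := by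
  nlinarith [mul_nonneg (mul_nonneg (sub_nonneg.2 hba) hb) (add_nonneg hb (hb.trans hba))]

namespace CubeRootGap

noncomputable def gap (t : ℝ) : ℝ := (t ^ 2 + 1) ^ ((1 : ℝ) / 3) - (t ^ 2) ^ ((1 : ℝ) / 3)

noncomputable def weight (t : ℝ) : ℝ := (t ^ 2 + 1) ^ (-(2 : ℝ) / 3)

lemma continuous_gap : Continuous gap := by
  unfold gap
  exact ((continuous_id.pow 2).add continuous_const).rpow_const (fun _ => Or.inr (by norm_num))
    |>.sub ((continuous_id.pow 2).rpow_const fun _ => Or.inr (by norm_num))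

lemma gap_nonneg (t : ℝ) : 0 ≤ gap t :=
  sub_nonneg.2 (rpow_le_rpow (by positivity) (by linarith) (by norm_num))

lemma gap_le_weight (t : ℝ) : gap t ≤ weight t := by
  have hweight : weight t = 1 / ((t ^ 2 + 1) ^ ((1 : ℝ) / 3)) ^ 2 := by
    rw [weight, ← rpow_natCast ((t ^ 2 + 1) ^ ((1 : ℝ) / 3)) 2, ← rpow_mul (by positivity), one_div,
      ← rpow_neg (by positivity)]
    norm_num
  have hcubes : ((t ^ 2 + 1) ^ ((1 : ℝ) / 3)) ^ 3 - ((t ^ 2) ^ ((1 : ℝ) / 3)) ^ 3 = 1 := by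
    rw [rpow_one_div_three_pow_three (by positivity), rpow_one_div_three_pow_three (by positivity)]
    ring
  rw [hweight, le_div_iff₀ (by positivity)]
  exact (sub_mul_sq_le_pow_three_sub_pow_three (by positivity)
    (sub_nonneg.1 (gap_nonneg t))).trans_eq hcubes

lemma weight_le_rpow {t : ℝ} (ht : 0 < t) : weight t ≤ t ^ (-(4 : ℝ) / 3) := by
  calc weight t ≤ (t ^ 2) ^ (-(2 : ℝ) / 3) :=
        rpow_le_rpow_of_nonpos (by positivity) (by linarith) (by norm_num)
    _ = t ^ (-(4 : ℝ) / 3) := by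
        rw [← rpow_natCast, ← rpow_mul ht.le]
        norm_num

lemma integrable_weight : Integrable weight := by
  have := integrable_rpow_neg_one_add_norm_sq (E := ℝ) (μ := volume) (r := 4 / 3) (by norm_num)
  convert this using 2 with t
  rw [weight, norm_eq_abs, sq_abs, add_comm]
  norm_num

lemma integrable_gap : Integrable gap :=
  integrable_weight.mono' continuous_gap.aestronglyMeasurable <| .of_forall fun t => by
    rw [norm_of_nonneg (gap_nonneg t)]
    exact gap_le_weight t

lemma hasDerivAt_sq_add_one_rpow_one_div_three (t : ℝ) :
    HasDerivAt (fun s : ℝ => (s ^ 2 + 1) ^ ((1 : ℝ) / 3)) (2 / 3 * t * weight t) t := by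
  convert ((hasDerivAt_pow 2 t).add_const 1).rpow_const (p := (1 : ℝ) / 3)
    (Or.inl (by positivity)) using 1
  rw [weight, show (1 : ℝ) / 3 - 1 = -2 / 3 by norm_num]
  push_cast
  ring

lemma hasDerivAt_mul_gap {t : ℝ} (ht : t ≠ 0) :
    HasDerivAt (fun s : ℝ => s * gap s) (5 / 3 * gap t - 2 / 3 * weight t) t := by
  have hsq := (hasDerivAt_pow 2 t).rpow_const (p := (1 : ℝ) / 3) (Or.inl (by positivity))
  refine ((hasDerivAt_id' t).mul
    ((hasDerivAt_sq_add_one_rpow_one_div_three t).sub hsq)).congr_deriv ?_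
  have hA : (t ^ 2 + 1) * weight t = (t ^ 2 + 1) ^ ((1 : ℝ) / 3) := by
    rw [weight, ← rpow_one_add' (by positivity) (by norm_num)]
    norm_num
  have hB : t ^ 2 * (t ^ 2) ^ ((1 : ℝ) / 3 - 1) = (t ^ 2) ^ ((1 : ℝ) / 3) := by
    rw [← rpow_one_add' (by positivity) (by norm_num)]
    norm_num
  rw [gap, Pi.sub_apply]
  push_cast
  linear_combination (2 / 3 : ℝ) * hA - (2 / 3 : ℝ) * hB

lemma tendsto_mul_gap_atTop : Tendsto (fun t : ℝ => t * gap t) atTop (𝓝 0) := by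
  refine squeeze_zero' (g := fun t : ℝ => t ^ (-(1 : ℝ) / 3))
    ((eventually_ge_atTop 0).mono fun t ht => ?_) ((eventually_gt_atTop 0).mono fun t ht => ?_) ?_
  · exact mul_nonneg ht (gap_nonneg t)
  · calc t * gap t ≤ t * t ^ (-(4 : ℝ) / 3) :=
          mul_le_mul_of_nonneg_left ((gap_le_weight t).trans (weight_le_rpow ht)) ht.le
      _ = t ^ (-(1 : ℝ) / 3) := by
          rw [← rpow_one_add' ht.le (by norm_num)]
          norm_num
  · convert tendsto_rpow_neg_atTop (y := (1 : ℝ) / 3) (by norm_num) using 2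
    norm_num

lemma integral_gap : ∫ t in Ioi (0 : ℝ), gap t = 2 / 5 * ∫ t in Ioi (0 : ℝ), weight t := by
  have hftc := integral_Ioi_of_hasDerivAt_of_tendsto
    (continuous_id.mul continuous_gap).continuousWithinAt
    (fun t ht => hasDerivAt_mul_gap (ne_of_gt ht))
    ((integrable_gap.const_mul _).sub (integrable_weight.const_mul _)).integrableOn
    tendsto_mul_gap_atTop
  rw [integral_sub (integrable_gap.const_mul _).integrableOn
    (integrable_weight.const_mul _).integrableOn, integral_const_mul, integral_const_mul,
    Pi.mul_apply, id_eq, zero_mul, sub_zero] at hftc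
  linarith

lemma image_sq_add_one_rpow_one_div_three_Ioi :
    (fun t : ℝ => (t ^ 2 + 1) ^ ((1 : ℝ) / 3)) '' Ioi 0 = Ioi 1 := by
  ext x
  constructor
  · rintro ⟨t, ht, rfl⟩
    exact one_lt_rpow (by nlinarith [mem_Ioi.1 ht]) (by norm_num)
  · intro hx
    have hx3 : (1 : ℝ) < x ^ 3 := one_lt_pow₀ hx (by norm_num)
    refine ⟨√(x ^ 3 - 1), sqrt_pos.2 (by linarith), ?_⟩
    dsimp only
    rw [sq_sqrt (by linarith : (0 : ℝ) ≤ x ^ 3 - 1), sub_add_cancel, ← rpow_natCast,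
      ← rpow_mul (by linarith [mem_Ioi.1 hx])]
    norm_num

lemma strictMonoOn_sq_add_one_rpow_one_div_three :
    StrictMonoOn (fun t : ℝ => (t ^ 2 + 1) ^ ((1 : ℝ) / 3)) (Ioi 0) := fun a ha b _ hab =>
  rpow_lt_rpow (by positivity) (by nlinarith [mem_Ioi.1 ha]) (by norm_num)

lemma integral_inv_sqrt_cube_sub_one :
    ∫ x in Ioi (1 : ℝ), 1 / √(x ^ 3 - 1) = 2 / 3 * ∫ t in Ioi (0 : ℝ), weight t := by
  rw [← image_sq_add_one_rpow_one_div_three_Ioi,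
    integral_image_eq_integral_abs_deriv_smul measurableSet_Ioi
      (fun t _ => (hasDerivAt_sq_add_one_rpow_one_div_three t).hasDerivWithinAt)
      strictMonoOn_sq_add_one_rpow_one_div_three.injOn,
    ← integral_const_mul]
  refine setIntegral_congr_fun measurableSet_Ioi fun t (ht : 0 < t) => ?_
  have hweight : 0 < weight t := by unfold weight; positivity
  rw [smul_eq_mul, abs_of_pos (by positivity), rpow_one_div_three_pow_three (by positivity),
    add_sub_cancel_right, sqrt_sq ht.le]
  field_simp

end CubeRootGap

theorem stmt0 :
    IntegrableOn (fun t : ℝ => (t ^ 2 + 1) ^ ((1 : ℝ) / 3) - (t ^ 2) ^ ((1 : ℝ) / 3))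
      (Ioi 0) volume ∧
    (∫ t in Ioi (0 : ℝ), ((t ^ 2 + 1) ^ ((1 : ℝ) / 3) - (t ^ 2) ^ ((1 : ℝ) / 3)))
      = (3 / 5) * ∫ x in Ioi (1 : ℝ), 1 / Real.sqrt (x ^ 3 - 1) := by
  refine ⟨CubeRootGap.integrable_gap.integrableOn, ?_⟩
  change ∫ t in Ioi (0 : ℝ), CubeRootGap.gap t = _
  rw [CubeRootGap.integral_gap, CubeRootGap.integral_inv_sqrt_cube_sub_one]
  ring
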